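/- Let f, g be nonnegative functions in L²(Ω, ν) with ν a probability measure, and c₁, c₂ > 0. Define cSSIM(f,g) := M(f,g)·S(f,g), with M(f,g) = (2μ_f μ_g + c₁)/(μ_f² + μ_g² + c₁) and S(f,g) = (2σ_fg + c₂)/(σ_ff + σ_gg + c₂). Then |1 − cSSIM(f,g)| ≤ c_{fg} ‖f − g‖²_{L²(ν)}, where c_{fg} = 4/(σ_ff + σ_gg + c₂) + 1/(μ_f² + μ_g² + c₁). -/

import Mathlib

open MeasureTheory

noncomputable def mu {α : Type*} [MeasurableSpace α] (ν : Measure α) (f : α → ℝ) : ℝ :=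
  ∫ x, f x ∂ν

noncomputable def cov {α : Type*} [MeasurableSpace α] (ν : Measure α) (f g : α → ℝ) : ℝ :=
  ∫ x, (f x - mu ν f) * (g x - mu ν g) ∂ν

noncomputable def Mlum {α : Type*} [MeasurableSpace α] (ν : Measure α) (f g : α → ℝ)
    (c1 : ℝ) : ℝ :=
  (2 * mu ν f * mu ν g + c1) / ((mu ν f) ^ 2 + (mu ν g) ^ 2 + c1)

noncomputable def Sstr {α : Type*} [MeasurableSpace α] (ν : Measure α) (f g : α → ℝ)
    (c2 : ℝ) : ℝ :=
  (2 * cov ν f g + c2) / (cov ν f f + cov ν g g + c2)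

noncomputable def cSSIM {α : Type*} [MeasurableSpace α] (ν : Measure α) (f g : α → ℝ)
    (c1 c2 : ℝ) : ℝ :=
  Mlum ν f g c1 * Sstr ν f g c2

/-!
Both factors of `cSSIM` have the shape `(2u + c) / (p + q + c)` with `|2u| ≤ p + q`, so they lie
in `[-1, 1]`, and `1 - xy ≤ (1 - x) + (1 - y)` on that square. The two defects are
`1 - M = (μ_f - μ_g)² / (μ_f² + μ_g² + c₁)` and `1 - S = Var(f - g) / (σ_ff + σ_gg + c₂)`,
and `(μ_f - μ_g)² + Var(f - g) = ‖f - g‖²`, so each numerator is at most `‖f - g‖²`.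
-/

open ProbabilityTheory

section Ratio

variable {u p q c : ℝ}

lemma one_sub_two_mul_add_div (hd : p + q + c ≠ 0) :
    1 - (2 * u + c) / (p + q + c) = (p + q - 2 * u) / (p + q + c) := by
  field_simp
  ring

lemma abs_two_mul_add_div_le_one (hc : 0 < c) (hu : |2 * u| ≤ p + q) :
    |(2 * u + c) / (p + q + c)| ≤ 1 := by
  have hd : 0 < p + q + c := by linarith [abs_nonneg (2 * u)]
  rw [abs_div, abs_of_pos hd, div_le_one hd]
  exact (abs_add_le _ _).trans (by rw [abs_of_pos hc]; linarith)

end Ratio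

lemma abs_one_sub_mul_le {x y : ℝ} (hx : |x| ≤ 1) (hy : |y| ≤ 1) :
    |1 - x * y| ≤ (1 - x) + (1 - y) := by
  have hxy : |x * y| ≤ 1 := by rw [abs_mul]; exact mul_le_one₀ hx (abs_nonneg y) hy
  have hy' : 0 ≤ 1 - y := by linarith [le_abs_self y]
  have hx' : x * (1 - y) ≤ 1 - y := by nlinarith [le_abs_self x]
  rw [abs_of_nonneg (by linarith [le_abs_self (x * y)])]
  linarith

section SSIM

variable {α : Type*} [MeasurableSpace α] {ν : Measure α} {f g : α → ℝ}

lemma cov_eq_covariance : cov ν f g = cov[f, g; ν] := rfl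

lemma one_sub_Mlum {c1 : ℝ} (hc1 : 0 < c1) :
    1 - Mlum ν f g c1 = (mu ν f - mu ν g) ^ 2 / (mu ν f ^ 2 + mu ν g ^ 2 + c1) := by
  rw [Mlum, mul_assoc, one_sub_two_mul_add_div (by positivity)]
  ring

lemma abs_Mlum_le_one {c1 : ℝ} (hc1 : 0 < c1) : |Mlum ν f g c1| ≤ 1 := by
  rw [Mlum, mul_assoc]
  refine abs_two_mul_add_div_le_one hc1 (abs_le.mpr ⟨?_, ?_⟩) <;>
    nlinarith [sq_nonneg (mu ν f + mu ν g), sq_nonneg (mu ν f - mu ν g)]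

lemma cov_add_cov_add_pos {c2 : ℝ} (hc2 : 0 < c2) : 0 < cov ν f f + cov ν g g + c2 := by
  have hf : 0 ≤ cov ν f f := integral_nonneg fun _ ↦ mul_self_nonneg _
  have hg : 0 ≤ cov ν g g := integral_nonneg fun _ ↦ mul_self_nonneg _
  linarith

variable [IsFiniteMeasure ν]

lemma one_sub_Sstr (hf : MemLp f 2 ν) (hg : MemLp g 2 ν) {c2 : ℝ} (hc2 : 0 < c2) :
    1 - Sstr ν f g c2 = Var[fun x ↦ f x - g x; ν] / (cov ν f f + cov ν g g + c2) := by
  rw [Sstr, one_sub_two_mul_add_div (cov_add_cov_add_pos hc2).ne', variance_fun_sub hf hg,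
    cov_eq_covariance, cov_eq_covariance, cov_eq_covariance, covariance_self hf.aemeasurable,
    covariance_self hg.aemeasurable]
  ring_nf

lemma abs_Sstr_le_one (hf : MemLp f 2 ν) (hg : MemLp g 2 ν) {c2 : ℝ} (hc2 : 0 < c2) :
    |Sstr ν f g c2| ≤ 1 := by
  have hsub := variance_fun_sub hf hg
  have hadd := variance_fun_add hf hg
  rw [Sstr, cov_eq_covariance, cov_eq_covariance, cov_eq_covariance,
    covariance_self hf.aemeasurable, covariance_self hg.aemeasurable]
  refine abs_two_mul_add_div_le_one hc2 (abs_le.mpr ⟨?_, ?_⟩)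
  · linarith [variance_nonneg (fun x ↦ f x + g x) ν]
  · linarith [variance_nonneg (fun x ↦ f x - g x) ν]

end SSIM

lemma sq_mu_sub_add_variance_sub {α : Type*} [MeasurableSpace α] {ν : Measure α}
    [IsProbabilityMeasure ν] {f g : α → ℝ} (hf : MemLp f 2 ν) (hg : MemLp g 2 ν) :
    (mu ν f - mu ν g) ^ 2 + Var[fun x ↦ f x - g x; ν] = ∫ x, (f x - g x) ^ 2 ∂ν := by
  rw [show (fun x ↦ f x - g x) = f - g from rfl, variance_eq_sub (hf.sub hg), mu, mu,
    ← integral_sub (hf.integrable one_le_two) (hg.integrable one_le_two)]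
  simp only [Pi.pow_apply, Pi.sub_apply]
  ring

theorem stmt_6_general {α : Type*} [MeasurableSpace α] (ν : Measure α) [IsProbabilityMeasure ν]
    (f g : α → ℝ) (hf : MemLp f 2 ν) (hg : MemLp g 2 ν)
    (c1 c2 : ℝ) (hc1 : 0 < c1) (hc2 : 0 < c2) :
    |1 - cSSIM ν f g c1 c2| ≤
      (4 / (cov ν f f + cov ν g g + c2) + 1 / ((mu ν f) ^ 2 + (mu ν g) ^ 2 + c1)) *
        ∫ x, (f x - g x) ^ 2 ∂ν := by
  have hB : 0 < cov ν f f + cov ν g g + c2 := cov_add_cov_add_pos hc2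
  have hI := sq_mu_sub_add_variance_sub hf hg
  have hV := variance_nonneg (fun x ↦ f x - g x) ν
  calc |1 - cSSIM ν f g c1 c2|
      ≤ (1 - Mlum ν f g c1) + (1 - Sstr ν f g c2) :=
        abs_one_sub_mul_le (abs_Mlum_le_one hc1) (abs_Sstr_le_one hf hg hc2)
    _ = (mu ν f - mu ν g) ^ 2 / (mu ν f ^ 2 + mu ν g ^ 2 + c1) +
          Var[fun x ↦ f x - g x; ν] / (cov ν f f + cov ν g g + c2) := by
        rw [one_sub_Mlum hc1, one_sub_Sstr hf hg hc2]
    _ ≤ (∫ x, (f x - g x) ^ 2 ∂ν) / (mu ν f ^ 2 + mu ν g ^ 2 + c1) +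
          4 * (∫ x, (f x - g x) ^ 2 ∂ν) / (cov ν f f + cov ν g g + c2) := by
        gcongr <;> linarith [sq_nonneg (mu ν f - mu ν g)]
    _ = _ := by ring

theorem stmt_6 {α : Type*} [MeasurableSpace α] (ν : Measure α) [IsProbabilityMeasure ν]
    (f g : α → ℝ) (hf : MemLp f 2 ν) (hg : MemLp g 2 ν)
    (hf0 : 0 ≤ᵐ[ν] f) (hg0 : 0 ≤ᵐ[ν] g) (c1 c2 : ℝ) (hc1 : 0 < c1) (hc2 : 0 < c2) :
    |1 - cSSIM ν f g c1 c2| ≤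
      (4 / (cov ν f f + cov ν g g + c2) + 1 / ((mu ν f) ^ 2 + (mu ν g) ^ 2 + c1)) *
        ∫ x, (f x - g x) ^ 2 ∂ν :=
  stmt_6_general ν f g hf hg c1 c2 hc1 hc2
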